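/- arXiv:1701.07965 — 2 statements merged into one kernel-verified Lean document; each statement's English description precedes it below -/
import Mathlib

section
/- Let (X,d) be a complete and bounded metric space, I a nonempty finite set, φ : [0,∞) → [0,∞) a comparison function, and for each i ∈ I let f_i : X → X be a φ-contraction. Then for every infinite word α = α₁α₂… ∈ Λ(I), the intersection ⋂_{n∈ℕ*} X_{[α]_n} consists of exactly one element. -/
open Filter Topology Set

/-- `φ : [0,∞) → [0,∞)` is a comparison function: it maps `[0,∞)` into `[0,∞)`,
is increasing, satisfies `φ t < t` for `t > 0`, and is right-continuous. -/
def IsComparisonFn (φ : ℝ → ℝ) : Prop :=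
  (∀ t : ℝ, 0 ≤ t → 0 ≤ φ t) ∧
  MonotoneOn φ (Set.Ici (0 : ℝ)) ∧
  (∀ t : ℝ, 0 < t → φ t < t) ∧
  (∀ t : ℝ, 0 ≤ t → ContinuousWithinAt φ (Set.Ici t) t)

/-- `f_{α₁…αₙ} = f_{α₁} ∘ f_{α₂} ∘ … ∘ f_{αₙ}` (the identity for the empty word). -/
def WordMap {X I : Type*} (f : I → X → X) : List I → X → X
  | [] => id
  | i :: w => f i ∘ WordMap f w

/-- `[α]_n`: the finite word consisting of the first `n` letters of the infinite word `α`. -/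
def Pref {I : Type*} (α : ℕ → I) (n : ℕ) : List I := List.ofFn (fun k : Fin n => α (k : ℕ))

/-- `X_w = f_w(X)`, the image of the whole space under the word map. -/
def WordSet {X I : Type*} (f : I → X → X) (w : List I) : Set X := Set.range (WordMap f w)

/-- A family `(f_i)_{i ∈ I}` of self-maps of `X` has attractor if:
(a) for every infinite word `α`, `⋂ₙ X_{[α]ₙ}` has a unique element `a_α`;
(b) whenever `a_α ≠ a_β`, some `X_{[α]_{n₀}}` and `X_{[β]_{n₀}}` are disjoint. -/
def HasAttractor {X I : Type*} (f : I → X → X) : Prop :=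
  (∀ α : ℕ → I, ∃! a : X, ∀ n : ℕ, a ∈ WordSet f (Pref α n)) ∧
  (∀ α β : ℕ → I, ∀ a b : X,
    (∀ n : ℕ, a ∈ WordSet f (Pref α n)) → (∀ n : ℕ, b ∈ WordSet f (Pref β n)) →
    a ≠ b →
    ∃ n₀ : ℕ, WordSet f (Pref α n₀) ∩ WordSet f (Pref β n₀) = ∅)

/-! The points `f_{[α]ₙ}(x₀)` form a Cauchy sequence: if `C` bounds the diameter of `X`, then
any two points of `X_{[α]ₙ}` are within `φⁿ(C)`, and `φⁿ(C) → 0` because the limit `L` of this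
decreasing sequence is a fixed point of the right-continuous `φ`, which forces `L = 0`. A `φ`-contraction is `1`-Lipschitz, so by
continuity the limit `a_α` satisfies `a_α = f_{[α]ₙ}(a_{σⁿα})` with `σⁿα` the shifted word; hence
`a_α ∈ X_{[α]ₙ}` for all `n`, and the same diameter bound gives uniqueness. -/

namespace IsComparisonFn

variable {φ : ℝ → ℝ}

theorem le_self (hφ : IsComparisonFn φ) {t : ℝ} (ht : 0 ≤ t) : φ t ≤ t := by
  obtain ⟨hnonneg, hmono, hlt, -⟩ := hφ
  rcases ht.eq_or_lt with rfl | ht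
  · -- `0 < φ 0` would give `φ (φ 0) < φ 0 ≤ φ (φ 0)`.
    by_contra! h
    exact (hlt _ h).not_ge (hmono self_mem_Ici (hnonneg 0 le_rfl) (hnonneg 0 le_rfl))
  · exact (hlt t ht).le

theorem iterate_nonneg (hφ : IsComparisonFn φ) {t : ℝ} (ht : 0 ≤ t) (n : ℕ) :
    0 ≤ φ^[n] t := by
  induction n with
  | zero => exact ht
  | succ n ih => rw [Function.iterate_succ_apply']; exact hφ.1 _ ih

theorem tendsto_iterate_zero (hφ : IsComparisonFn φ) {t : ℝ} (ht : 0 ≤ t) :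
    Tendsto (fun n => φ^[n] t) atTop (𝓝 0) := by
  set u : ℕ → ℝ := fun n => φ^[n] t
  have hanti : Antitone u := antitone_nat_of_succ_le fun n => by
    simp only [u, Function.iterate_succ_apply']
    exact hφ.le_self (hφ.iterate_nonneg ht n)
  have hbdd : BddBelow (range u) := ⟨0, forall_mem_range.2 (hφ.iterate_nonneg ht)⟩
  set L := ⨅ n, u n
  have hL : Tendsto u atTop (𝓝 L) := tendsto_atTop_ciInf hanti hbdd
  have hL0 : 0 ≤ L := le_ciInf (hφ.iterate_nonneg ht)
  have hfix : φ L = L := by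
    have hright : Tendsto u atTop (𝓝[≥] L) :=
      tendsto_nhdsWithin_of_tendsto_nhds_of_eventually_within _ hL
        (Eventually.of_forall fun n => ciInf_le hbdd n)
    refine tendsto_nhds_unique ((hφ.2.2.2 L hL0).tendsto.comp hright) ?_
    simpa only [u, Function.comp_def, Function.iterate_succ_apply'] using
      (tendsto_add_atTop_iff_nat 1).2 hL
  obtain h | h := hL0.eq_or_lt
  · rwa [← h] at hL
  · exact absurd hfix (hφ.2.2.1 L h).ne

theorem lipschitzWith_one {Y : Type*} [PseudoMetricSpace Y] (hφ : IsComparisonFn φ)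
    {g : Y → Y} (hg : ∀ x y, dist (g x) (g y) ≤ φ (dist x y)) : LipschitzWith 1 g :=
  LipschitzWith.of_dist_le_mul fun x y => by
    simpa using (hg x y).trans (hφ.le_self dist_nonneg)

end IsComparisonFn

section Words

variable {X I : Type*}

theorem wordMap_append (f : I → X → X) (v w : List I) :
    WordMap f (v ++ w) = WordMap f v ∘ WordMap f w := by
  induction v with
  | nil => rfl
  | cons i v ih => simp only [List.cons_append, WordMap, ih, Function.comp_assoc]

theorem length_pref (α : ℕ → I) (n : ℕ) : (Pref α n).length = n := List.length_ofFn

theorem pref_add (α : ℕ → I) (n m : ℕ) :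
    Pref α (n + m) = Pref α n ++ Pref (fun k => α (n + k)) m := by
  simp [Pref, List.ofFn_add]

theorem wordMap_pref_add (f : I → X → X) (α : ℕ → I) (n m : ℕ) (x : X) :
    WordMap f (Pref α (n + m)) x =
      WordMap f (Pref α n) (WordMap f (Pref (fun k => α (n + k)) m) x) := by
  rw [pref_add, wordMap_append, Function.comp_apply]

theorem continuous_wordMap [TopologicalSpace X] {f : I → X → X} (hf : ∀ i, Continuous (f i))
    (w : List I) : Continuous (WordMap f w) := by
  induction w with
  | nil => exact continuous_id
  | cons i w ih => exact (hf i).comp ih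

end Words

section Contractions

variable {X I : Type*} [MetricSpace X] {φ : ℝ → ℝ} {f : I → X → X} {C : ℝ}

theorem dist_wordMap_le (hφ : IsComparisonFn φ)
    (hf : ∀ i x y, dist (f i x) (f i y) ≤ φ (dist x y)) (hC : ∀ x y : X, dist x y ≤ C)
    (w : List I) (x y : X) : dist (WordMap f w x) (WordMap f w y) ≤ φ^[w.length] C := by
  have hC0 : 0 ≤ C := dist_self x ▸ hC x x
  induction w with
  | nil => exact hC _ _
  | cons i w ih =>
    rw [List.length_cons, Function.iterate_succ_apply']
    exact (hf i _ _).trans (hφ.2.1 dist_nonneg (hφ.iterate_nonneg hC0 _) ih)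

theorem dist_le_of_mem_wordSet (hφ : IsComparisonFn φ)
    (hf : ∀ i x y, dist (f i x) (f i y) ≤ φ (dist x y)) (hC : ∀ x y : X, dist x y ≤ C)
    {w : List I} {a b : X} (ha : a ∈ WordSet f w) (hb : b ∈ WordSet f w) :
    dist a b ≤ φ^[w.length] C := by
  obtain ⟨x, rfl⟩ := ha
  obtain ⟨y, rfl⟩ := hb
  exact dist_wordMap_le hφ hf hC w x y

theorem cauchySeq_wordMap_pref (hφ : IsComparisonFn φ)
    (hf : ∀ i x y, dist (f i x) (f i y) ≤ φ (dist x y)) (hC : ∀ x y : X, dist x y ≤ C)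
    (α : ℕ → I) (x : X) : CauchySeq fun n => WordMap f (Pref α n) x := by
  refine cauchySeq_of_le_tendsto_0 (fun n => φ^[n] C) (fun n m N hn hm => ?_)
    (hφ.tendsto_iterate_zero (dist_self x ▸ hC x x))
  obtain ⟨k, rfl⟩ := Nat.exists_eq_add_of_le hn
  obtain ⟨l, rfl⟩ := Nat.exists_eq_add_of_le hm
  simpa only [length_pref] using dist_le_of_mem_wordSet hφ hf hC
    ⟨_, (wordMap_pref_add f α N k x).symm⟩ ⟨_, (wordMap_pref_add f α N l x).symm⟩

end Contractions

theorem ifs_iInter_singleton_general {X I : Type*} [MetricSpace X] [CompleteSpace X] [Nonempty X]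
    (hbdd : ∃ C : ℝ, ∀ x y : X, dist x y ≤ C)
    (φ : ℝ → ℝ) (hφ : IsComparisonFn φ)
    (f : I → X → X) (hf : ∀ i : I, ∀ x y : X, dist (f i x) (f i y) ≤ φ (dist x y)) :
    ∀ α : ℕ → I, ∃! a : X, ∀ n : ℕ, a ∈ WordSet f (Pref α n) := by
  obtain ⟨C, hC⟩ := hbdd
  obtain ⟨x₀⟩ := ‹Nonempty X›
  choose A hA using fun α : ℕ → I =>
    cauchySeq_tendsto_of_complete (cauchySeq_wordMap_pref hφ hf hC α x₀)
  have hcont := continuous_wordMap fun i => (hφ.lipschitzWith_one (hf i)).continuous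
  have hmem : ∀ α n, A α ∈ WordSet f (Pref α n) := by
    intro α n
    have hshift : Tendsto
        (fun m => WordMap f (Pref α n) (WordMap f (Pref (fun k => α (n + k)) m) x₀))
        atTop (𝓝 (A α)) :=
      ((tendsto_add_atTop_iff_nat n).2 (hA α)).congr fun m => by rw [add_comm, wordMap_pref_add]
    exact ⟨A fun k => α (n + k), tendsto_nhds_unique (((hcont _).tendsto _).comp (hA _)) hshift⟩
  intro α
  refine ⟨A α, hmem α, fun b hb => dist_le_zero.1 <|
    ge_of_tendsto' (hφ.tendsto_iterate_zero (dist_self x₀ ▸ hC x₀ x₀)) fun n => ?_⟩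
  simpa only [length_pref] using dist_le_of_mem_wordSet hφ hf hC (hb n) (hmem α n)

/-- For an IFS of `φ`-contractions on a complete bounded metric space,
`⋂ₙ X_{[α]ₙ}` is a singleton for every infinite word `α`. -/
theorem ifs_iInter_singleton {X I : Type*} [MetricSpace X] [CompleteSpace X] [Nonempty X]
    [Finite I] [Nonempty I]
    (hbdd : ∃ C : ℝ, ∀ x y : X, dist x y ≤ C)
    (φ : ℝ → ℝ) (hφ : IsComparisonFn φ)
    (f : I → X → X) (hf : ∀ i : I, ∀ x y : X, dist (f i x) (f i y) ≤ φ (dist x y)) :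
    ∀ α : ℕ → I, ∃! a : X, ∀ n : ℕ, a ∈ WordSet f (Pref α n) :=
  ifs_iInter_singleton_general hbdd φ hφ f hf
end

section
/- Let X be a set, I a nonempty finite set, (f_i)_{i∈I} a family of functions f_i : X → X having attractor, and μ = (z_n)_{n∈ℕ} a sequence with 0 < z_{n+1} ≤ z_n for every n ∈ ℕ. Then d^μ(f_i(x), f_i(y)) ≤ d^μ(x,y) for every i ∈ I and every x,y ∈ X; moreover d^μ is symmetric, satisfies the triangle inequality d^μ(x,y) ≤ d^μ(x,z) + d^μ(z,y) for all x,y,z ∈ X, and d^μ(x,y) ≤ z₀ for all x,y ∈ X. -/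
open Filter Topology Set

/-- Given a selection `a` of the points `a_β`,
`Y_w = {a_β : β ∈ Λ(I), X_w ∩ X_{[β]ₙ} ≠ ∅ for every n}`. -/
def YSet {X I : Type*} (f : I → X → X) (a : (ℕ → I) → X) (w : List I) : Set X :=
  {y | ∃ β : ℕ → I, y = a β ∧ ∀ n : ℕ, (WordSet f w ∩ WordSet f (Pref β n)).Nonempty}

/-- `X̃_w = X_w ∪ Y_w`. -/
def XtSet {X I : Type*} (f : I → X → X) (a : (ℕ → I) → X) (w : List I) : Set X :=
  WordSet f w ∪ YSet f a w

open Classical in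
/-- The semi-metric `d^μ` associated to the family and the sequence `μ`:
`d^μ(x,x) = 0` and for `x ≠ y`,
`d^μ(x,y) = inf { Σ_{i=0}^n z_{|α_i|} : x ∈ X̃_{α₀}, y ∈ X̃_{α_n},`
`X̃_{α_i} ∩ X̃_{α_{i+1}} ≠ ∅ for all 0 ≤ i ≤ n-1 }`. -/
noncomputable def dmu {X I : Type*} (f : I → X → X) (a : (ℕ → I) → X) (μ : ℕ → ℝ)
    (x y : X) : ℝ :=
  if x = y then 0
  else sInf {s : ℝ | ∃ (n : ℕ) (c : ℕ → List I),
    x ∈ XtSet f a (c 0) ∧ y ∈ XtSet f a (c n) ∧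
    (∀ i < n, (XtSet f a (c i) ∩ XtSet f a (c (i + 1))).Nonempty) ∧
    s = ∑ i ∈ Finset.range (n + 1), μ (c i).length}

section Aux

variable {X I : Type*} (f : I → X → X) (a : (ℕ → I) → X) (μ : ℕ → ℝ)

/-- The set over which the infimum in `dmu` is taken. -/
def ChainSet (x y : X) : Set ℝ :=
  {s : ℝ | ∃ (n : ℕ) (c : ℕ → List I),
    x ∈ XtSet f a (c 0) ∧ y ∈ XtSet f a (c n) ∧
    (∀ i < n, (XtSet f a (c i) ∩ XtSet f a (c (i + 1))).Nonempty) ∧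
    s = ∑ i ∈ Finset.range (n + 1), μ (c i).length}

lemma dmu_eq_csInf {x y : X} (h : x ≠ y) : dmu f a μ x y = sInf (ChainSet f a μ x y) := by
  simp [dmu, h, ChainSet]

lemma mem_XtSet_nil (x : X) : x ∈ XtSet f a [] :=
  Or.inl ⟨x, rfl⟩

lemma dmu_self (x : X) : dmu f a μ x x = 0 := by simp [dmu]

lemma chainSet_nonempty (x y : X) : (ChainSet f a μ x y).Nonempty :=
  ⟨μ 0, 0, fun _ => [], mem_XtSet_nil f a x, mem_XtSet_nil f a y,
    fun i hi => absurd hi (Nat.not_lt_zero i), by simp⟩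

lemma chainSet_nonneg (hpos : ∀ n : ℕ, 0 < μ n) {x y : X} {s : ℝ}
    (hs : s ∈ ChainSet f a μ x y) : 0 ≤ s := by
  obtain ⟨n, c, -, -, -, rfl⟩ := hs
  exact Finset.sum_nonneg fun i _ => (hpos _).le

lemma chainSet_bddBelow (hpos : ∀ n : ℕ, 0 < μ n) (x y : X) :
    BddBelow (ChainSet f a μ x y) :=
  ⟨0, fun s hs => chainSet_nonneg f a μ hpos hs⟩

lemma dmu_nonneg (hpos : ∀ n : ℕ, 0 < μ n) (x y : X) : 0 ≤ dmu f a μ x y := by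
  by_cases h : x = y
  · simp [dmu, h]
  · rw [dmu_eq_csInf f a μ h]
    exact le_csInf (chainSet_nonempty f a μ x y) fun s hs => chainSet_nonneg f a μ hpos hs

lemma dmu_le_of_mem (hpos : ∀ n : ℕ, 0 < μ n) {x y : X} (h : x ≠ y) {s : ℝ}
    (hs : s ∈ ChainSet f a μ x y) : dmu f a μ x y ≤ s := by
  rw [dmu_eq_csInf f a μ h]
  exact csInf_le (chainSet_bddBelow f a μ hpos x y) hs

/-- `cons' i β` is the infinite word `iβ`. -/
def cons' (i : I) (β : ℕ → I) : ℕ → I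
  | 0 => i
  | k + 1 => β k

lemma pref_cons (i : I) (β : ℕ → I) (n : ℕ) :
    Pref (cons' i β) (n + 1) = i :: Pref β n := by
  simp [Pref, List.ofFn_succ, cons']

lemma wordSet_cons (i : I) (w : List I) :
    WordSet f (i :: w) = f i '' WordSet f w := by
  simp [WordSet, WordMap, Set.range_comp]

lemma pref_zero (β : ℕ → I) : Pref β 0 = [] := rfl

lemma mem_wordSet_pref_zero (β : ℕ → I) (x : X) : x ∈ WordSet f (Pref β 0) := ⟨x, rfl⟩

lemma map_XtSet (hF : HasAttractor f)
    (ha : ∀ (α : ℕ → I) (n : ℕ), a α ∈ WordSet f (Pref α n))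
    (i : I) (w : List I) {x : X} (hx : x ∈ XtSet f a w) :
    f i x ∈ XtSet f a (i :: w) := by
  rcases hx with hx | hx
  · left
    rw [wordSet_cons]
    exact ⟨x, hx, rfl⟩
  · obtain ⟨β, rfl, hβ⟩ := hx
    have key : f i (a β) = a (cons' i β) := by
      obtain ⟨u, -, huniq⟩ := hF.1 (cons' i β)
      have h1 : ∀ n, f i (a β) ∈ WordSet f (Pref (cons' i β) n) := by
        intro n
        cases n with
        | zero => exact mem_wordSet_pref_zero f _ _
        | succ m =>
          rw [pref_cons, wordSet_cons]
          exact ⟨a β, ha β m, rfl⟩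
      rw [huniq _ h1, huniq _ (ha (cons' i β))]
    right
    refine ⟨cons' i β, key.symm ▸ rfl, fun n => ?_⟩
    cases n with
    | zero =>
      exact ⟨WordMap f (i :: w) (a β), ⟨a β, rfl⟩, mem_wordSet_pref_zero f _ _⟩
    | succ m =>
      obtain ⟨p, hp1, hp2⟩ := hβ m
      rw [pref_cons, wordSet_cons, wordSet_cons]
      exact ⟨f i p, ⟨p, hp1, rfl⟩, ⟨p, hp2, rfl⟩⟩

lemma chain_rev {x y : X} {s : ℝ} (hs : s ∈ ChainSet f a μ x y) :
    s ∈ ChainSet f a μ y x := by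
  obtain ⟨n, c, h0, hn, hadj, rfl⟩ := hs
  refine ⟨n, fun k => c (n - k), by simpa using hn, by simpa using h0, ?_, ?_⟩
  · intro i hi
    have hj : n - (i + 1) < n := by omega
    obtain ⟨p, hp1, hp2⟩ := hadj (n - (i + 1)) hj
    have hrw : n - (i + 1) + 1 = n - i := by omega
    rw [hrw] at hp2
    exact ⟨p, hp2, hp1⟩
  · have := Finset.sum_range_reflect (fun k => μ (c k).length) (n + 1)
    simp only [Nat.add_sub_cancel] at this
    exact this.symm

lemma chain_concat {x z y : X} {s t : ℝ} (hs : s ∈ ChainSet f a μ x z)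
    (ht : t ∈ ChainSet f a μ z y) : s + t ∈ ChainSet f a μ x y := by
  obtain ⟨n, c, hc0, hcn, hcadj, rfl⟩ := hs
  obtain ⟨m, d, hd0, hdm, hdadj, rfl⟩ := ht
  refine ⟨n + m + 1, fun k => if k ≤ n then c k else d (k - (n + 1)), ?_, ?_, ?_, ?_⟩
  · simpa using hc0
  · have h1 : ¬ (n + m + 1 ≤ n) := by omega
    have h2 : n + m + 1 - (n + 1) = m := by omega
    simp only [h1, if_false, h2]
    exact hdm
  · intro i hi
    rcases lt_trichotomy i n with h | h | h
    · simp only [if_pos (show i ≤ n from h.le), if_pos (show i + 1 ≤ n from h)]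
      exact hcadj i h
    · subst h
      have h1 : ¬ (i + 1 ≤ i) := by omega
      simp only [le_refl, if_pos, h1, if_false]
      have : i + 1 - (i + 1) = 0 := by omega
      rw [this]
      exact ⟨z, hcn, hd0⟩
    · have h1 : ¬ (i ≤ n) := by omega
      have h2 : ¬ (i + 1 ≤ n) := by omega
      simp only [h1, h2, if_false]
      have h3 : i + 1 - (n + 1) = (i - (n + 1)) + 1 := by omega
      rw [h3]
      exact hdadj _ (by omega)
  · have hsplit : n + m + 1 + 1 = (n + 1) + (m + 1) := by omega
    rw [hsplit]
    conv_rhs => rw [Finset.sum_range_add]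
    congr 1
    · apply Finset.sum_congr rfl
      intro i hi
      simp only [Finset.mem_range] at hi
      simp only [if_pos (show i ≤ n by omega)]
    · apply Finset.sum_congr rfl
      intro i hi
      simp only [Finset.mem_range] at hi
      simp only [if_neg (show ¬ (n + 1 + i ≤ n) by omega)]
      rw [show n + 1 + i - (n + 1) = i by omega]

end Aux

theorem dmu_nonexpansive_symm_triangle_bounded' {X I : Type*} [Finite I] [Nonempty I]
    (f : I → X → X) (hF : HasAttractor f)
    (a : (ℕ → I) → X) (ha : ∀ (α : ℕ → I) (n : ℕ), a α ∈ WordSet f (Pref α n))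
    (μ : ℕ → ℝ) (hpos : ∀ n : ℕ, 0 < μ n) (hdec : ∀ n : ℕ, μ (n + 1) ≤ μ n) :
    (∀ i : I, ∀ x y : X, dmu f a μ (f i x) (f i y) ≤ dmu f a μ x y) ∧
    (∀ x y : X, dmu f a μ x y = dmu f a μ y x) ∧
    (∀ x y z : X, dmu f a μ x y ≤ dmu f a μ x z + dmu f a μ z y) ∧
    (∀ x y : X, dmu f a μ x y ≤ μ 0) := by
  refine ⟨?_, ?_, ?_, ?_⟩
  · -- nonexpansive
    intro i x y
    by_cases hfxy : f i x = f i y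
    · rw [show dmu f a μ (f i x) (f i y) = 0 by simp [dmu, hfxy]]
      exact dmu_nonneg f a μ hpos x y
    · have hxy : x ≠ y := fun h => hfxy (h ▸ rfl)
      rw [dmu_eq_csInf f a μ hxy]
      apply le_csInf (chainSet_nonempty f a μ x y)
      rintro s ⟨n, c, hc0, hcn, hadj, rfl⟩
      have hmem : (∑ j ∈ Finset.range (n + 1), μ (i :: c j).length)
          ∈ ChainSet f a μ (f i x) (f i y) := by
        refine ⟨n, fun j => i :: c j, map_XtSet f a hF ha i _ hc0,
          map_XtSet f a hF ha i _ hcn, fun j hj => ?_, rfl⟩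
        obtain ⟨p, hp1, hp2⟩ := hadj j hj
        exact ⟨f i p, map_XtSet f a hF ha i _ hp1, map_XtSet f a hF ha i _ hp2⟩
      refine le_trans (dmu_le_of_mem f a μ hpos hfxy hmem) ?_
      apply Finset.sum_le_sum
      intro j _
      simpa using hdec (c j).length
  · -- symmetric
    intro x y
    by_cases h : x = y
    · simp [dmu, h, eq_comm]
    · rw [dmu_eq_csInf f a μ h, dmu_eq_csInf f a μ (Ne.symm h)]
      congr 1
      exact Set.Subset.antisymm (fun s hs => chain_rev f a μ hs)
        (fun s hs => chain_rev f a μ hs)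
  · -- triangle
    intro x y z
    by_cases hxy : x = y
    · subst hxy
      rw [dmu_self]
      have := dmu_nonneg f a μ hpos x z
      have := dmu_nonneg f a μ hpos z x
      linarith
    by_cases hxz : x = z
    · subst hxz
      rw [dmu_self, zero_add]
    by_cases hzy : z = y
    · subst hzy
      rw [dmu_self, add_zero]
    · have key : ∀ s ∈ ChainSet f a μ x z, ∀ t ∈ ChainSet f a μ z y,
          dmu f a μ x y ≤ s + t := fun s hs t ht =>
        dmu_le_of_mem f a μ hpos hxy (chain_concat f a μ hs ht)
      rw [dmu_eq_csInf f a μ hxz, dmu_eq_csInf f a μ hzy]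
      have h1 : ∀ t ∈ ChainSet f a μ z y,
          dmu f a μ x y ≤ sInf (ChainSet f a μ x z) + t := by
        intro t ht
        have : dmu f a μ x y - t ≤ sInf (ChainSet f a μ x z) :=
          le_csInf (chainSet_nonempty f a μ x z) fun s hs => by
            linarith [key s hs t ht]
        linarith
      have : dmu f a μ x y - sInf (ChainSet f a μ x z) ≤ sInf (ChainSet f a μ z y) :=
        le_csInf (chainSet_nonempty f a μ z y) fun t ht => by linarith [h1 t ht]
      linarith
  · -- bounded
    intro x y
    by_cases h : x = y
    · rw [h, dmu_self]
      exact (hpos 0).le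
    · exact dmu_le_of_mem f a μ hpos h ⟨0, fun _ => [], mem_XtSet_nil f a x,
        mem_XtSet_nil f a y, fun i hi => absurd hi (Nat.not_lt_zero i), by simp⟩

/-- **Proposition 3.8 b), c), e), f).** The functions `f_i` are nonexpansive with respect
to `d^μ`; moreover `d^μ` is symmetric, satisfies the triangle inequality, and is
bounded by `z₀`. -/
theorem dmu_nonexpansive_symm_triangle_bounded {X I : Type*} [Finite I] [Nonempty I]
    (f : I → X → X) (hF : HasAttractor f)
    (a : (ℕ → I) → X) (ha : ∀ (α : ℕ → I) (n : ℕ), a α ∈ WordSet f (Pref α n))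
    (μ : ℕ → ℝ) (hpos : ∀ n : ℕ, 0 < μ n) (hdec : ∀ n : ℕ, μ (n + 1) ≤ μ n) :
    (∀ i : I, ∀ x y : X, dmu f a μ (f i x) (f i y) ≤ dmu f a μ x y) ∧
    (∀ x y : X, dmu f a μ x y = dmu f a μ y x) ∧
    (∀ x y z : X, dmu f a μ x y ≤ dmu f a μ x z + dmu f a μ z y) ∧
    (∀ x y : X, dmu f a μ x y ≤ μ 0) := by
  exact dmu_nonexpansive_symm_triangle_bounded' f hF a ha μ hpos hdec
end
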